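/- If f : [0,1] → ℝ is continuous, then R_n(f;·) converges to f uniformly on [0,1] as n → ∞, where R_n is the Pólya–Bernstein-type operator with parameters a = x, b = 1−x, c = −min{x,1−x}/(n−1). -/

import Mathlib

/-!
`R_n(f;x)` is the expectation of `f(K/n)` for `K` Pólya–Eggenberger distributed with parameters
`(x, 1-x, c)`; the choice of `c` keeps every urn weight nonnegative, so `R_n` averages `f` against a
probability distribution on the nodes `k/n`. The Chu–Vandermonde identity for rising factorials gives
the factorial moments, hence mean `x` and variance `x(1-x)(1+nc)/(n(1+c)) ≤ 1/(2n)` for `K/n`.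
Splitting `f(k/n) - f(x)` by uniform continuity near `x`, and bounding it by `2M(k/n-x)²/δ²` away
from `x`, gives `|R_n f - f| ≤ ε + M/(δ²n)` uniformly on `[0,1]`.
-/

/-- Generalized rising factorial with increment `h`: `x^(m,h) = x(x+h)···(x+(m-1)h)`. -/
noncomputable def rfac (x h : ℝ) (m : ℕ) : ℝ := ∏ i ∈ Finset.range m, (x + i * h)

/-- Pólya urn probability `p_{n,k}^{a,b,c}`. -/
noncomputable def polyaProb (a b c : ℝ) (n k : ℕ) : ℝ :=
  (n.choose k : ℝ) * rfac a c k * rfac b c (n - k) / rfac (a + b) c n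

/-- The operator `R_n(f;x)` with `c = -min{x,1-x}/(n-1)`. -/
noncomputable def Rop (n : ℕ) (f : ℝ → ℝ) (x : ℝ) : ℝ :=
  ∑ k ∈ Finset.range (n + 1),
    polyaProb x (1 - x) (-(min x (1 - x)) / ((n : ℝ) - 1)) n k * f ((k : ℝ) / n)

/-- Modulus of continuity of `f` on `[a,b]`. -/
noncomputable def modulus (f : ℝ → ℝ) (a b δ : ℝ) : ℝ :=
  sSup {d : ℝ | ∃ u ∈ Set.Icc a b, ∃ v ∈ Set.Icc a b, |u - v| ≤ δ ∧ d = |f u - f v|}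

open Finset Filter Topology

section RisingFactorial

variable (x h : ℝ) (m : ℕ)

@[simp]
lemma rfac_zero : rfac x h 0 = 1 := prod_range_zero _

lemma rfac_succ : rfac x h (m + 1) = rfac x h m * (x + m * h) := prod_range_succ _ _

lemma rfac_succ' : rfac x h (m + 1) = x * rfac (x + h) h m := by
  simp only [rfac, prod_range_succ', Nat.cast_zero, zero_mul, add_zero, Nat.cast_succ]
  rw [mul_comm]
  congr 1
  exact prod_congr rfl fun i _ => by ring

variable {x h m}

lemma rfac_nonneg (hx : ∀ i < m, 0 ≤ x + i * h) : 0 ≤ rfac x h m :=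
  prod_nonneg fun i hi => hx i (mem_range.1 hi)

lemma rfac_pos (hx : ∀ i < m, 0 < x + i * h) : 0 < rfac x h m :=
  prod_pos fun i hi => hx i (mem_range.1 hi)

end RisingFactorial

noncomputable def polyaWeight (a b c : ℝ) (n k : ℕ) : ℝ :=
  (n.choose k : ℝ) * rfac a c k * rfac b c (n - k)

lemma polyaProb_eq_div (a b c : ℝ) (n k : ℕ) :
    polyaProb a b c n k = polyaWeight a b c n k / rfac (a + b) c n := rfl

section PolyaWeight

variable (a b c : ℝ)

/-- The Chu–Vandermonde identity for rising factorials. -/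
theorem sum_polyaWeight (n : ℕ) :
    ∑ k ∈ range (n + 1), polyaWeight a b c n k = rfac (a + b) c n := by
  induction n with
  | zero => simp [polyaWeight]
  | succ n ih =>
    have pascal := sum_choose_succ_mul (fun i j => rfac a c i * rfac b c j) n
    have step : ∀ i ∈ range (n + 1),
        (n.choose i : ℝ) * (rfac a c i * rfac b c (n + 1 - i))
          + n.choose i * (rfac a c (i + 1) * rfac b c (n - i))
          = polyaWeight a b c n i * (a + b + n * c) := by
      intro i hi
      have hin : i ≤ n := Nat.lt_succ_iff.1 (mem_range.1 hi)
      rw [Nat.sub_add_comm hin, rfac_succ, rfac_succ, polyaWeight, Nat.cast_sub hin]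
      ring
    simp only [polyaWeight, mul_assoc] at pascal ⊢
    rw [pascal, ← sum_add_distrib, sum_congr rfl step, ← sum_mul, ih, rfac_succ]

lemma succ_mul_polyaWeight_succ (n k : ℕ) :
    (k + 1 : ℝ) * polyaWeight a b c (n + 1) (k + 1) = (n + 1) * a * polyaWeight (a + c) b c n k := by
  have hchoose : ((n + 1).choose (k + 1) : ℝ) * (k + 1) = (n + 1) * n.choose k := by
    exact_mod_cast (Nat.add_one_mul_choose_eq n k).symm
  rw [polyaWeight, polyaWeight, Nat.add_sub_add_right, rfac_succ']
  linear_combination (a * rfac (a + c) c k * rfac b c (n - k)) * hchoose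

lemma sum_mul_polyaWeight (n : ℕ) :
    ∑ k ∈ range (n + 2), (k : ℝ) * polyaWeight a b c (n + 1) k
      = (n + 1) * a * rfac (a + b + c) c n := by
  rw [sum_range_succ']
  simp only [Nat.cast_zero, zero_mul, add_zero, Nat.cast_succ, succ_mul_polyaWeight_succ,
    ← mul_sum, sum_polyaWeight, add_right_comm a c b]

lemma sum_descFactorial_mul_polyaWeight (n : ℕ) :
    ∑ k ∈ range (n + 3), (k : ℝ) * (k - 1) * polyaWeight a b c (n + 2) k
      = (n + 2) * (n + 1) * a * (a + c) * rfac (a + b + 2 * c) c n := by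
  rw [sum_range_succ']
  have hshift : ∀ k : ℕ, ((k + 1 : ℕ) : ℝ) * ((k + 1 : ℕ) - 1) * polyaWeight a b c (n + 2) (k + 1)
      = (n + 2) * a * (k * polyaWeight (a + c) b c (n + 1) k) := by
    intro k
    push_cast
    rw [mul_right_comm, succ_mul_polyaWeight_succ]
    push_cast
    ring
  simp only [hshift, ← mul_sum, sum_mul_polyaWeight, Nat.cast_zero, zero_mul, add_zero]
  ring_nf

end PolyaWeight

section PolyaProb

variable {a b c : ℝ} {n : ℕ}

lemma sum_polyaProb (h : rfac (a + b) c n ≠ 0) :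
    ∑ k ∈ range (n + 1), polyaProb a b c n k = 1 := by
  simp only [polyaProb_eq_div, ← sum_div, sum_polyaWeight, div_self h]

lemma sum_mul_polyaProb (h : rfac (a + b) c n ≠ 0) :
    ∑ k ∈ range (n + 1), (k : ℝ) * polyaProb a b c n k = n * a / (a + b) := by
  simp only [polyaProb_eq_div, mul_div_assoc', ← sum_div]
  rcases n with _ | n
  · simp
  · rw [rfac_succ', mul_ne_zero_iff] at h
    rw [sum_mul_polyaWeight, rfac_succ']
    field_simp [h.1, h.2]
    push_cast
    ring

lemma sum_descFactorial_mul_polyaProb (h : rfac (a + b) c n ≠ 0) :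
    ∑ k ∈ range (n + 1), (k : ℝ) * (k - 1) * polyaProb a b c n k
      = n * (n - 1) * a * (a + c) / ((a + b) * (a + b + c)) := by
  simp only [polyaProb_eq_div, mul_div_assoc', ← sum_div]
  rcases n with _ | _ | n
  · simp
  · simp [sum_range_succ]
  · rw [rfac_succ', rfac_succ', add_assoc (a + b) c c, ← two_mul] at h ⊢
    simp only [mul_ne_zero_iff] at h
    rw [sum_descFactorial_mul_polyaWeight]
    field_simp [h.1, h.2.1, h.2.2]
    push_cast
    ring

lemma sum_polyaProb_mul_sq_sub {x : ℝ} (hn : n ≠ 0) (h : rfac 1 c n ≠ 0) (hc : 1 + c ≠ 0) :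
    ∑ k ∈ range (n + 1), polyaProb x (1 - x) c n k * ((k : ℝ) / n - x) ^ 2
      = x * (1 - x) * (1 + n * c) / (n * (1 + c)) := by
  have hn' : (n : ℝ) ≠ 0 := Nat.cast_ne_zero.2 hn
  have hexpand : ∀ k ∈ range (n + 1), polyaProb x (1 - x) c n k * ((k : ℝ) / n - x) ^ 2
      = 1 / n ^ 2 * ((k : ℝ) * (k - 1) * polyaProb x (1 - x) c n k)
        + (1 / n ^ 2 - 2 * x / n) * ((k : ℝ) * polyaProb x (1 - x) c n k)
        + x ^ 2 * polyaProb x (1 - x) c n k := by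
    intro k _
    field_simp
    ring
  have hsum : x + (1 - x) = 1 := by ring
  rw [← hsum] at h
  rw [sum_congr rfl hexpand, sum_add_distrib, sum_add_distrib, ← mul_sum, ← mul_sum, ← mul_sum,
    sum_descFactorial_mul_polyaProb h, sum_mul_polyaProb h, sum_polyaProb h, hsum]
  field_simp
  ring

end PolyaProb

lemma polyaProb_nonneg {a b c : ℝ} {n : ℕ} (hc : c ≤ 0) (ha : ∀ i < n, 0 ≤ a + i * c)
    (hb : ∀ i < n, 0 ≤ b + i * c) (k : ℕ) : 0 ≤ polyaProb a b c n k := by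
  rcases lt_or_ge n k with hnk | hkn
  · simp [polyaProb, Nat.choose_eq_zero_of_lt hnk]
  have hab : ∀ i < n, 0 ≤ a + b + i * c := fun i hi => by
    nlinarith [ha i hi, hb i hi, mul_nonpos_of_nonneg_of_nonpos (Nat.cast_nonneg (α := ℝ) i) hc]
  refine div_nonneg (mul_nonneg (mul_nonneg (Nat.cast_nonneg _) ?_) ?_) (rfac_nonneg hab)
  · exact rfac_nonneg fun i hi => ha i (hi.trans_le hkn)
  · exact rfac_nonneg fun i hi => hb i (by omega)

noncomputable def polyaParam (n : ℕ) (x : ℝ) : ℝ := -(min x (1 - x)) / ((n : ℝ) - 1)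

lemma Rop_eq_sum (n : ℕ) (f : ℝ → ℝ) (x : ℝ) :
    Rop n f x = ∑ k ∈ range (n + 1), polyaProb x (1 - x) (polyaParam n x) n k * f (k / n) := rfl

section PolyaParam

variable {n : ℕ} {x : ℝ}

lemma polyaParam_nonpos (hn : 1 ≤ n) (hx : x ∈ Set.Icc (0 : ℝ) 1) : polyaParam n x ≤ 0 := by
  have : (1 : ℝ) ≤ n := by exact_mod_cast hn
  exact div_nonpos_of_nonpos_of_nonneg (neg_nonpos.2 (le_min hx.1 (by linarith [hx.2])))
    (by linarith)

lemma min_add_mul_polyaParam_nonneg (hx : x ∈ Set.Icc (0 : ℝ) 1) {i : ℕ} (hi : i < n) :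
    0 ≤ min x (1 - x) + i * polyaParam n x := by
  have hm : 0 ≤ min x (1 - x) := le_min hx.1 (by linarith [hx.2])
  have hin : (i : ℝ) ≤ n - 1 := by
    have : (i : ℝ) + 1 ≤ n := by exact_mod_cast hi
    linarith
  have : (i : ℝ) * min x (1 - x) / (n - 1) ≤ min x (1 - x) :=
    div_le_of_le_mul₀ (by linarith [(Nat.cast_nonneg i : (0 : ℝ) ≤ i)]) hm
      (by nlinarith)
  rw [polyaParam, mul_div_assoc', mul_neg, neg_div]
  linarith

lemma polyaProb_polyaParam_nonneg (hn : 1 ≤ n) (hx : x ∈ Set.Icc (0 : ℝ) 1) (k : ℕ) :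
    0 ≤ polyaProb x (1 - x) (polyaParam n x) n k :=
  polyaProb_nonneg (polyaParam_nonpos hn hx)
    (fun i hi => by linarith [min_add_mul_polyaParam_nonneg hx hi, min_le_left x (1 - x)])
    (fun i hi => by linarith [min_add_mul_polyaParam_nonneg hx hi, min_le_right x (1 - x)]) k

lemma half_le_one_add_mul_polyaParam (hx : x ∈ Set.Icc (0 : ℝ) 1) {i : ℕ} (hi : i < n) :
    1 / 2 ≤ 1 + i * polyaParam n x := by
  have := min_add_mul_polyaParam_nonneg hx hi
  have : min x (1 - x) ≤ 1 / 2 := by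
    rcases le_total x (1 / 2) with h | h
    · exact (min_le_left _ _).trans h
    · exact (min_le_right _ _).trans (by linarith)
  linarith

lemma sum_polyaProb_polyaParam (hx : x ∈ Set.Icc (0 : ℝ) 1) :
    ∑ k ∈ range (n + 1), polyaProb x (1 - x) (polyaParam n x) n k = 1 := by
  refine sum_polyaProb (ne_of_gt ?_)
  rw [add_sub_cancel]
  exact rfac_pos fun i hi => by linarith [half_le_one_add_mul_polyaParam hx hi]

lemma sum_polyaProb_polyaParam_mul_sq_sub_le (hn : 2 ≤ n) (hx : x ∈ Set.Icc (0 : ℝ) 1) :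
    ∑ k ∈ range (n + 1), polyaProb x (1 - x) (polyaParam n x) n k * ((k : ℝ) / n - x) ^ 2
      ≤ 1 / (2 * n) := by
  set c := polyaParam n x
  have hc : c ≤ 0 := polyaParam_nonpos (by omega) hx
  have hc1 : 1 / 2 ≤ 1 + c := by simpa using half_le_one_add_mul_polyaParam hx (i := 1) hn
  have hrfac : 0 < rfac 1 c n :=
    rfac_pos fun i hi => by linarith [half_le_one_add_mul_polyaParam hx hi]
  have hn0 : (0 : ℝ) < n := by exact_mod_cast (by omega : 0 < n)
  rw [sum_polyaProb_mul_sq_sub (by omega) hrfac.ne' (by linarith),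
    div_le_div_iff₀ (by positivity) (by positivity)]
  have hx4 : x * (1 - x) ≤ 1 / 4 := by nlinarith [sq_nonneg (x - 1 / 2)]
  have hxx : 0 ≤ x * (1 - x) := mul_nonneg hx.1 (by linarith [hx.2])
  nlinarith [mul_nonneg hxx (mul_nonneg hn0.le (neg_nonneg.2 hc))]

end PolyaParam

section Estimate

variable {f : ℝ → ℝ} {s : Set ℝ} {M δ ε : ℝ}

/-- Near `v` the oscillation of `f` is below `ε`; far from it, `2M` is absorbed by `(u - v)² / δ²`. -/
lemma abs_sub_le_add_mul_sq (hδ : 0 < δ) (hM : ∀ u ∈ s, ‖f u‖ ≤ M)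
    (hf : ∀ u ∈ s, ∀ v ∈ s, dist u v < δ → dist (f u) (f v) < ε) {u v : ℝ} (hu : u ∈ s)
    (hv : v ∈ s) : |f u - f v| ≤ ε + 2 * M / δ ^ 2 * (u - v) ^ 2 := by
  have hε : 0 < ε := by simpa using hf v hv v hv (by simpa using hδ)
  have hM0 : 0 ≤ M := (norm_nonneg _).trans (hM v hv)
  rcases lt_or_ge (dist u v) δ with hclose | hfar
  · have := hf u hu v hv hclose
    rw [Real.dist_eq] at this
    have : 0 ≤ 2 * M / δ ^ 2 * (u - v) ^ 2 := by positivity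
    linarith
  · rw [Real.dist_eq] at hfar
    have hsq : δ ^ 2 ≤ (u - v) ^ 2 := by
      rw [← sq_abs (u - v)]
      exact pow_le_pow_left₀ hδ.le hfar 2
    have h2M : 2 * M ≤ 2 * M / δ ^ 2 * (u - v) ^ 2 := by
      rw [div_mul_eq_mul_div, le_div_iff₀ (by positivity)]
      exact mul_le_mul_of_nonneg_left hsq (by positivity)
    have := abs_sub (f u) (f v)
    linarith [hM u hu, hM v hv, Real.norm_eq_abs (f u), Real.norm_eq_abs (f v)]

lemma abs_sum_mul_sub_le {ι : Type*} {S : Finset ι} {p t : ι → ℝ} {x : ℝ}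
    (hp : ∀ i ∈ S, 0 ≤ p i) (hp1 : ∑ i ∈ S, p i = 1) (ht : ∀ i ∈ S, t i ∈ s) (hx : x ∈ s)
    (hδ : 0 < δ) (hM : ∀ u ∈ s, ‖f u‖ ≤ M)
    (hf : ∀ u ∈ s, ∀ v ∈ s, dist u v < δ → dist (f u) (f v) < ε) :
    |∑ i ∈ S, p i * f (t i) - f x| ≤ ε + 2 * M / δ ^ 2 * ∑ i ∈ S, p i * (t i - x) ^ 2 := by
  calc |∑ i ∈ S, p i * f (t i) - f x|
      = |∑ i ∈ S, p i * (f (t i) - f x)| := by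
        simp only [mul_sub, sum_sub_distrib, ← sum_mul, hp1, one_mul]
    _ ≤ ∑ i ∈ S, p i * |f (t i) - f x| := by
        refine (abs_sum_le_sum_abs _ _).trans (le_of_eq (sum_congr rfl fun i hi => ?_))
        rw [abs_mul, abs_of_nonneg (hp i hi)]
    _ ≤ ∑ i ∈ S, p i * (ε + 2 * M / δ ^ 2 * (t i - x) ^ 2) :=
        sum_le_sum fun i hi => mul_le_mul_of_nonneg_left
          (abs_sub_le_add_mul_sq hδ hM hf (ht i hi) hx) (hp i hi)
    _ = ∑ i ∈ S, (p i * ε + 2 * M / δ ^ 2 * (p i * (t i - x) ^ 2)) :=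
        sum_congr rfl fun i _ => by ring
    _ = ε + 2 * M / δ ^ 2 * ∑ i ∈ S, p i * (t i - x) ^ 2 := by
        rw [sum_add_distrib, ← sum_mul, hp1, one_mul, mul_sum]

end Estimate

lemma abs_Rop_sub_le {f : ℝ → ℝ} {M δ ε : ℝ} (hδ : 0 < δ)
    (hM : ∀ u ∈ Set.Icc (0 : ℝ) 1, ‖f u‖ ≤ M)
    (hf : ∀ u ∈ Set.Icc (0 : ℝ) 1, ∀ v ∈ Set.Icc (0 : ℝ) 1, dist u v < δ → dist (f u) (f v) < ε)
    {n : ℕ} (hn : 2 ≤ n) {x : ℝ} (hx : x ∈ Set.Icc (0 : ℝ) 1) :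
    |Rop n f x - f x| ≤ ε + 2 * M / δ ^ 2 * (1 / (2 * n)) := by
  have hM0 : 0 ≤ M := (norm_nonneg _).trans (hM x hx)
  have hnodes : ∀ k ∈ range (n + 1), (k : ℝ) / n ∈ Set.Icc (0 : ℝ) 1 := fun k hk =>
    ⟨by positivity, div_le_one_of_le₀ (by exact_mod_cast Nat.lt_succ_iff.1 (mem_range.1 hk))
      (Nat.cast_nonneg n)⟩
  rw [Rop_eq_sum]
  refine (abs_sum_mul_sub_le (fun k _ => polyaProb_polyaParam_nonneg (by omega) hx k)
    (sum_polyaProb_polyaParam hx) hnodes hx hδ hM hf).trans ?_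
  gcongr
  exact sum_polyaProb_polyaParam_mul_sq_sub_le hn hx

theorem Rop_tendstoUniformly (f : ℝ → ℝ) (hf : ContinuousOn f (Set.Icc (0 : ℝ) 1)) :
    TendstoUniformlyOn (fun n x => Rop n f x) f Filter.atTop (Set.Icc (0 : ℝ) 1) := by
  obtain ⟨M, hM⟩ := isCompact_Icc.exists_bound_of_continuousOn hf
  rw [Metric.tendstoUniformlyOn_iff]
  intro ε hε
  obtain ⟨δ, hδ, hfδ⟩ := Metric.uniformContinuousOn_iff.1
    (isCompact_Icc.uniformContinuousOn_of_continuous hf) (ε / 2) (half_pos hε)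
  have hinv : Tendsto (fun n : ℕ => 1 / (2 * (n : ℝ))) atTop (𝓝 0) :=
    (tendsto_const_div_atTop_nhds_zero_nat (1 / 2)).congr fun n => div_div _ _ _
  have hbound := (tendsto_const_nhds (x := ε / 2)).add
    ((tendsto_const_nhds (x := 2 * M / δ ^ 2)).mul hinv)
  rw [mul_zero, add_zero] at hbound
  filter_upwards [eventually_ge_atTop 2, hbound.eventually (gt_mem_nhds (half_lt_self hε))]
    with n hn hlt x hx
  rw [dist_comm, Real.dist_eq]
  exact (abs_Rop_sub_le hδ hM hfδ hn hx).trans_lt hlt
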